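/- arXiv:2106.10398 — 4 statements merged into one kernel-verified Lean document; each statement's English description precedes it below -/
import Mathlib

section
/- For a Gumbel random variable Y with location μ and scale σ > 0, and any real-valued Borel measurable function g with g(Y), Y·g(Y), Y²·g(Y) integrable, the expectation of g(X) for X with BG density equals (1/Z_δ)[2·E[g(Y)] − 2δ·E[Y g(Y)] + δ²·E[Y² g(Y)]], where Z_δ = 1 + δ²σ²π²/6 + (δμ + δσγ − 1)². -/
open MeasureTheory Real

/-- The Gumbel density with location `μ` and scale `σ`. -/
noncomputable def gumbelPDF (μ σ x : ℝ) : ℝ :=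
  (1 / σ) * Real.exp (-((x - μ) / σ) - Real.exp (-((x - μ) / σ)))

/-- The normalizing constant of the bimodal Gumbel density. -/
noncomputable def Zdelta (μ σ δ : ℝ) : ℝ :=
  1 + δ ^ 2 * σ ^ 2 * π ^ 2 / 6 +
    (δ * μ + δ * σ * Real.eulerMascheroniConstant - 1) ^ 2

/-- The bimodal Gumbel density. -/
noncomputable def bgPDF (μ σ δ x : ℝ) : ℝ :=
  ((1 - δ * x) ^ 2 + 1) * gumbelPDF μ σ x / Zdelta μ σ δ

theorem bg_expectation_formula
    (μ σ δ : ℝ) (hσ : 0 < σ) (g : ℝ → ℝ) (hg : Measurable g)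
    (h0 : Integrable (fun x => g x * gumbelPDF μ σ x))
    (h1 : Integrable (fun x => x * g x * gumbelPDF μ σ x))
    (h2 : Integrable (fun x => x ^ 2 * g x * gumbelPDF μ σ x)) :
    ∫ x : ℝ, g x * bgPDF μ σ δ x
      = (1 / Zdelta μ σ δ) *
        (2 * (∫ x : ℝ, g x * gumbelPDF μ σ x)
          - 2 * δ * (∫ x : ℝ, x * g x * gumbelPDF μ σ x)
          + δ ^ 2 * (∫ x : ℝ, x ^ 2 * g x * gumbelPDF μ σ x)) := by
  have key : ∀ x, g x * bgPDF μ σ δ x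
      = (1 / Zdelta μ σ δ) *
        (2 * (g x * gumbelPDF μ σ x) - 2 * δ * (x * g x * gumbelPDF μ σ x)
          + δ ^ 2 * (x ^ 2 * g x * gumbelPDF μ σ x)) := by
    intro x; unfold bgPDF; ring
  simp_rw [key]
  rw [integral_const_mul]
  congr 1
  have hsub : Integrable (fun x => 2 * (g x * gumbelPDF μ σ x)
      - 2 * δ * (x * g x * gumbelPDF μ σ x)) :=
    (h0.const_mul 2).sub (h1.const_mul (2 * δ))
  rw [integral_add hsub (h2.const_mul (δ ^ 2)),
    integral_sub (h0.const_mul 2) (h1.const_mul (2 * δ)),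
    integral_const_mul, integral_const_mul, integral_const_mul]
end

section
/- For a Gumbel random variable Y with location μ and scale σ > 0, for any x ∈ ℝ and k ∈ ℕ, the truncated moment E[Y^k · 1{Y ≤ x}] equals Σ_{i=0}^{k} C(k,i) μ^{k−i} σ^i · I(i; exp(−(x−μ)/σ), +∞), where I(i; a, +∞) = (−1)^i ∫_a^∞ (ln v)^i e^{−v} dv. -/
/-!
The substitution `y = μ - σ log v`, i.e. `v = exp (-(y - μ) / σ)`, is a decreasing bijection from
`(exp (-(x - μ) / σ), ∞)` onto `(-∞, x)` under which `gumbelPDF μ σ y dy` becomes `e^{-v} dv`.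
The truncated moment is therefore `∫_a^∞ (μ - σ log v)^k e^{-v} dv`, and expanding the power by the
binomial theorem produces the incomplete moments `I(i; a, ∞)`, all of which converge since
`(log v)^i` grows slower than `e^{v/2}`.
-/

open MeasureTheory Real Finset

/-- Incomplete moment `I(k; a, ∞) = (−1)^k ∫_a^∞ (ln v)^k e^{−v} dv`. -/
noncomputable def Iinc (k : ℕ) (a : ℝ) : ℝ :=
  (-1 : ℝ) ^ k * ∫ v in Set.Ioi a, (Real.log v) ^ k * Real.exp (-v)

open Filter Asymptotics

theorem image_sub_mul_log_Ioi_exp (μ x : ℝ) {σ : ℝ} (hσ : 0 < σ) :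
    (fun v => μ - σ * log v) '' Set.Ioi (exp (-((x - μ) / σ))) = Set.Iio x := by
  have hcomp : (fun v => μ - σ * log v) = (μ - ·) ∘ (σ * ·) ∘ log := rfl
  rw [hcomp, Set.image_comp, Set.image_comp, image_log_Ioi (exp_pos _), log_exp,
    Set.image_mul_left_Ioi hσ, Set.image_const_sub_Ioi]
  congr 1
  field_simp
  ring

theorem setIntegral_Iic_eq_setIntegral_Ioi_sub_mul_log {E : Type*} [NormedAddCommGroup E]
    [NormedSpace ℝ E] (f : ℝ → E) (μ x : ℝ) {σ : ℝ} (hσ : 0 < σ) :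
    ∫ y in Set.Iic x, f y =
      ∫ v in Set.Ioi (exp (-((x - μ) / σ))), (σ / v) • f (μ - σ * log v) := by
  set s := Set.Ioi (exp (-((x - μ) / σ)))
  have hpos : ∀ v ∈ s, 0 < v := fun v hv => (exp_pos _).trans hv
  have hderiv : ∀ v ∈ s, HasDerivWithinAt (fun v => μ - σ * log v) (-(σ / v)) s v := by
    intro v hv
    simpa [div_eq_mul_inv] using
      (((hasDerivAt_log (hpos v hv).ne').const_mul σ).const_sub μ).hasDerivWithinAt
  have hinj : Set.InjOn (fun v => μ - σ * log v) s := by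
    intro u hu v hv huv
    refine log_injOn_pos (hpos u hu) (hpos v hv) (mul_left_cancel₀ hσ.ne' ?_)
    simpa using huv
  rw [integral_Iic_eq_integral_Iio, ← image_sub_mul_log_Ioi_exp μ x hσ,
    integral_image_eq_integral_abs_deriv_smul measurableSet_Ioi hderiv hinj]
  refine setIntegral_congr_fun measurableSet_Ioi fun v hv => ?_
  rw [abs_neg, abs_of_pos (div_pos hσ (hpos v hv))]

theorem gumbelPDF_sub_mul_log (μ : ℝ) {σ v : ℝ} (hσ : σ ≠ 0) (hv : 0 < v) :
    gumbelPDF μ σ (μ - σ * log v) = v * exp (-v) / σ := by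
  have hstd : -((μ - σ * log v - μ) / σ) = log v := by
    field_simp
    ring
  rw [gumbelPDF, hstd, exp_sub, exp_log hv, exp_neg]
  field_simp

theorem integrableOn_log_pow_mul_exp_neg_Ioi (i : ℕ) {a : ℝ} (ha : 0 < a) :
    IntegrableOn (fun v => log v ^ i * exp (-v)) (Set.Ioi a) := by
  refine integrable_of_isBigO_exp_neg one_half_pos ?_ ?_
  · exact ((continuousOn_log.mono fun v hv => (ha.trans_le hv).ne').pow i).mul
      (continuous_exp.comp continuous_neg).continuousOn
  · have hlog : (fun v => log v ^ i) =O[atTop] fun v => exp (1 / 2 * v) := by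
      refine isLittleO_pow_log_id_atTop.isBigO.trans ?_
      exact (isLittleO_pow_exp_pos_mul_atTop 1 one_half_pos).isBigO.congr_left pow_one
    refine (hlog.mul (isBigO_refl _ _)).congr_right fun v => ?_
    rw [← exp_add]
    ring_nf

theorem integral_sub_mul_log_pow_mul_exp_neg_Ioi (μ σ : ℝ) (k : ℕ) {a : ℝ} (ha : 0 < a) :
    ∫ v in Set.Ioi a, (μ - σ * log v) ^ k * exp (-v) =
      ∑ i ∈ range (k + 1), (k.choose i : ℝ) * μ ^ (k - i) * σ ^ i * Iinc i a := by
  have hexpand : ∀ v, (μ - σ * log v) ^ k * exp (-v) =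
      ∑ i ∈ range (k + 1),
        ((k.choose i : ℝ) * μ ^ (k - i) * σ ^ i * (-1) ^ i) * (log v ^ i * exp (-v)) := by
    intro v
    rw [sub_eq_add_neg, add_comm, add_pow, sum_mul]
    refine sum_congr rfl fun i _ => ?_
    rw [neg_pow, mul_pow]
    ring
  simp_rw [hexpand]
  rw [integral_finsetSum _ fun i _ => (integrableOn_log_pow_mul_exp_neg_Ioi i ha).const_mul _]
  refine sum_congr rfl fun i _ => ?_
  rw [integral_const_mul, Iinc]
  ring

theorem gumbel_truncated_moment
    (μ σ : ℝ) (hσ : 0 < σ) (x : ℝ) (k : ℕ) :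
    ∫ y in Set.Iic x, y ^ k * gumbelPDF μ σ y
      = ∑ i ∈ Finset.range (k + 1),
          (k.choose i : ℝ) * μ ^ (k - i) * σ ^ i *
            Iinc i (Real.exp (-((x - μ) / σ))) := by
  rw [setIntegral_Iic_eq_setIntegral_Ioi_sub_mul_log _ μ x hσ,
    ← integral_sub_mul_log_pow_mul_exp_neg_Ioi μ σ k (exp_pos _)]
  refine setIntegral_congr_fun measurableSet_Ioi fun v hv => ?_
  have hv : 0 < v := (exp_pos _).trans hv
  rw [smul_eq_mul, gumbelPDF_sub_mul_log μ hσ.ne' hv]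
  field_simp
end

section
/- Suppose (μ, σ, δ) satisfies: (i) δ > max{1, (1/σ)(e^{μ/σ} − 1)}, (ii) 2δ(1+δ)/[(1+δ)²+1] < (1/σ)(e^{(1+μ)/σ} − 1), (iii) 2δ(1−2δ)/[(1−2δ)²+1] < (1/σ)(e^{−(2−μ)/σ} − 1), and (iv) 2δ(1−3δ)/[(1−3δ)²+1] > (1/σ)(e^{−(3−μ)/σ} − 1). Then the function g(x) = (1/σ)[exp(−(x−μ)/σ) − 1] − 2δ(1−δx)/[(1−δx)² + 1] has at least three distinct real roots r₁, r₂, r₃ with −1 < r₁ < 0 < r₂ < 2 < r₃ < 3. -/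
open Real

/-- The mode-determining function of the bimodal Gumbel density. -/
noncomputable def bgG (μ σ δ x : ℝ) : ℝ :=
  (1 / σ) * (Real.exp (-((x - μ) / σ)) - 1) -
    2 * δ * (1 - δ * x) / ((1 - δ * x) ^ 2 + 1)

lemma bgG_cont (μ σ δ : ℝ) : Continuous (bgG μ σ δ) := by
  unfold bgG
  apply Continuous.sub
  · fun_prop
  · exact Continuous.div (by fun_prop) (by fun_prop) (fun x => by positivity)

theorem bg_three_roots
    (μ σ δ : ℝ) (hσ : 0 < σ)
    (h1 : δ > max 1 ((1 / σ) * (Real.exp (μ / σ) - 1)))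
    (h2 : 2 * δ * (1 + δ) / ((1 + δ) ^ 2 + 1)
            < (1 / σ) * (Real.exp ((1 + μ) / σ) - 1))
    (h3 : 2 * δ * (1 - 2 * δ) / ((1 - 2 * δ) ^ 2 + 1)
            < (1 / σ) * (Real.exp (-((2 - μ) / σ)) - 1))
    (h4 : 2 * δ * (1 - 3 * δ) / ((1 - 3 * δ) ^ 2 + 1)
            > (1 / σ) * (Real.exp (-((3 - μ) / σ)) - 1)) :
    ∃ r₁ r₂ r₃ : ℝ,
      -1 < r₁ ∧ r₁ < 0 ∧ 0 < r₂ ∧ r₂ < 2 ∧ 2 < r₃ ∧ r₃ < 3 ∧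
      bgG μ σ δ r₁ = 0 ∧ bgG μ σ δ r₂ = 0 ∧ bgG μ σ δ r₃ = 0 := by
  have hc := bgG_cont μ σ δ
  have e1 : bgG μ σ δ (-1) =
      (1 / σ) * (Real.exp ((1 + μ) / σ) - 1) - 2 * δ * (1 + δ) / ((1 + δ) ^ 2 + 1) := by
    unfold bgG
    rw [show -(((-1 : ℝ) - μ) / σ) = (1 + μ) / σ by ring,
        show (1 : ℝ) - δ * (-1) = 1 + δ by ring]
  have e0 : bgG μ σ δ 0 = (1 / σ) * (Real.exp (μ / σ) - 1) - δ := by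
    unfold bgG
    rw [show -(((0 : ℝ) - μ) / σ) = μ / σ by ring]
    norm_num
  have e2 : bgG μ σ δ 2 =
      (1 / σ) * (Real.exp (-((2 - μ) / σ)) - 1)
        - 2 * δ * (1 - 2 * δ) / ((1 - 2 * δ) ^ 2 + 1) := by
    unfold bgG
    rw [show (1 : ℝ) - δ * 2 = 1 - 2 * δ by ring]
  have e3 : bgG μ σ δ 3 =
      (1 / σ) * (Real.exp (-((3 - μ) / σ)) - 1)
        - 2 * δ * (1 - 3 * δ) / ((1 - 3 * δ) ^ 2 + 1) := by
    unfold bgG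
    rw [show (1 : ℝ) - δ * 3 = 1 - 3 * δ by ring]
  have hm1 : 0 < bgG μ σ δ (-1) := by rw [e1]; linarith
  have h0 : bgG μ σ δ 0 < 0 := by
    rw [e0]
    have := (le_max_right 1 ((1 / σ) * (Real.exp (μ / σ) - 1))).trans_lt h1
    linarith
  have h2' : 0 < bgG μ σ δ 2 := by rw [e2]; linarith
  have h3' : bgG μ σ δ 3 < 0 := by rw [e3]; linarith
  obtain ⟨r₁, hr₁, hfr₁⟩ := intermediate_value_Ioo' (by norm_num : (-1 : ℝ) ≤ 0)
    hc.continuousOn (Set.mem_Ioo.mpr ⟨h0, hm1⟩)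
  obtain ⟨r₂, hr₂, hfr₂⟩ := intermediate_value_Ioo (by norm_num : (0 : ℝ) ≤ 2)
    hc.continuousOn (Set.mem_Ioo.mpr ⟨h0, h2'⟩)
  obtain ⟨r₃, hr₃, hfr₃⟩ := intermediate_value_Ioo' (by norm_num : (2 : ℝ) ≤ 3)
    hc.continuousOn (Set.mem_Ioo.mpr ⟨h3', h2'⟩)
  exact ⟨r₁, r₂, r₃, hr₁.1, hr₁.2, hr₂.1, hr₂.2, hr₃.1, hr₃.2, hfr₁, hfr₂, hfr₃⟩
end

section
/- I(3; 0, +∞) := −∫_0^∞ (ln v)³ e^{−v} dv = 2ζ(3) + γ³ + γπ²/2, where γ is the Euler–Mascheroni constant and ζ the Riemann zeta function. -/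
/-!
The integral is `Γ'''(1)`. Write `ψ = (log Γ)'`. By Bohr–Mollerup `log Γ` is convex, so `ψ` is
monotone on `(0, ∞)`; moreover `ψ (x + 1) = ψ x + 1 / x` and `ψ 1 = -γ`. Two monotone solutions
of this recurrence that agree at `1` coincide: their difference is `1`-periodic, vanishes at the
integers, and by monotonicity is at most `1 / n` in absolute value on `[n, n + 1]`. Hence
`ψ x = -γ + ∑ (1 / (k + 1) - 1 / (x + k))`. Differentiating termwise, `ψ' = ∑ 1 / (x + k) ^ 2` and
`ψ'' = -2 ∑ 1 / (x + k) ^ 3`, and `Γ''' = Γ (ψ ^ 3 + 3 ψ ψ' + ψ'')` evaluates at `1` to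
`-γ ^ 3 - γ π ^ 2 / 2 - 2 ζ(3)`.
-/

open MeasureTheory Real Set Filter Topology Asymptotics

local notation "γ" => eulerMascheroniConstant

section MonotoneSolutions

variable {f g r : ℝ → ℝ}

theorem abs_sub_le_of_monotoneOn_of_add_one (hf : MonotoneOn f (Ioi 0))
    (hg : MonotoneOn g (Ioi 0)) (hfr : ∀ x > 0, f (x + 1) = f x + r x)
    (hgr : ∀ x > 0, g (x + 1) = g x + r x) {j y : ℝ} (hj : 0 < j) (hfgj : f j = g j)
    (hjy : j ≤ y) (hyj : y ≤ j + 1) : |f y - g y| ≤ r j := by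
  have hy : 0 < y := hj.trans_le hjy
  have hj1 : (0 : ℝ) < j + 1 := by positivity
  have hf_lo := hf hj hy hjy
  have hg_lo := hg hj hy hjy
  have hf_hi := hfr j hj ▸ hf hy hj1 hyj
  have hg_hi := hgr j hj ▸ hg hy hj1 hyj
  rw [abs_sub_le_iff]
  constructor <;> linarith

theorem eqOn_Ioi_of_monotoneOn_of_add_one (hf : MonotoneOn f (Ioi 0))
    (hg : MonotoneOn g (Ioi 0)) (hfr : ∀ x > 0, f (x + 1) = f x + r x)
    (hgr : ∀ x > 0, g (x + 1) = g x + r x) (hr : Tendsto r atTop (𝓝 0)) (h1 : f 1 = g 1) :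
    EqOn f g (Ioi 0) := by
  have periodic : ∀ x > 0, ∀ n : ℕ, f (x + n) - g (x + n) = f x - g x := by
    intro x hx n
    induction n with
    | zero => simp
    | succ n ih =>
      have hxn : x + n > 0 := by positivity
      rw [Nat.cast_succ, ← add_assoc, hfr _ hxn, hgr _ hxn, ← ih]
      ring
  have agree_nat (n : ℕ) : f (n + 1) = g (n + 1) := by
    have := periodic 1 one_pos n
    rw [h1, sub_self, sub_eq_zero, add_comm] at this
    exact this
  intro x (hx : 0 < x)
  have bound (n : ℕ) : |f x - g x| ≤ r ((n + ⌊x⌋₊ : ℕ) + 1) := by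
    rw [← periodic x hx (n + 1)]
    have hfloor := Nat.floor_le hx.le
    have hfloor' := Nat.lt_floor_add_one x
    refine abs_sub_le_of_monotoneOn_of_add_one hf hg hfr hgr (by positivity) (agree_nat _) ?_ ?_ <;>
      push_cast <;> linarith
  have hlim : Tendsto (fun n : ℕ => r ((n + ⌊x⌋₊ : ℕ) + 1)) atTop (𝓝 0) :=
    hr.comp (tendsto_atTop_add_const_right _ 1
      (tendsto_natCast_atTop_atTop.comp (tendsto_add_atTop_nat _)))
  exact sub_eq_zero.mp (abs_nonpos_iff.mp (ge_of_tendsto' hlim bound))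

end MonotoneSolutions

theorem hasDerivAt_one_div_add_pow (c : ℝ) (p : ℕ) {y : ℝ} (hy : y + c ≠ 0) :
    HasDerivAt (fun z => 1 / (z + c) ^ p) (-p / (y + c) ^ (p + 1)) y := by
  have := (((hasDerivAt_id' y).add_const c).fun_pow p).inv (pow_ne_zero p hy)
  simp only [← one_div] at this
  refine this.congr_deriv ?_
  cases p with
  | zero => simp
  | succ p => rw [Nat.add_sub_cancel]; field_simp; ring

theorem summable_one_div_add_pow {x : ℝ} (hx : 0 < x) {p : ℕ} (hp : 2 ≤ p) :
    Summable (fun k : ℕ => 1 / (x + k) ^ p) := by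
  have := (Real.summable_one_div_nat_add_rpow x p).mpr (by exact_mod_cast hp)
  refine this.congr fun k => ?_
  rw [abs_of_pos (by positivity), rpow_natCast, add_comm]

theorem exists_summable_bound_div_add_pow (c : ℝ) {q : ℕ} (hq : 2 ≤ q) {a : ℝ} (ha : 0 < a) :
    ∃ u : ℕ → ℝ, Summable u ∧ ∀ n : ℕ, ∀ y, a < y → ‖c / (y + n) ^ q‖ ≤ u n := by
  refine ⟨fun n => |c| * (1 / (a + n) ^ q), (summable_one_div_add_pow ha hq).mul_left _,
    fun n y hy => ?_⟩
  rw [norm_div, norm_pow, Real.norm_eq_abs, Real.norm_eq_abs,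
    abs_of_pos (show 0 < y + n by linarith [n.cast_nonneg (α := ℝ)])]
  dsimp only
  rw [mul_one_div]
  gcongr

section SeriesOnIoi

variable {g g' : ℕ → ℝ → ℝ} {y₀ x : ℝ}

theorem summable_of_hasDerivAt_Ioi (hg : ∀ n y, 0 < y → HasDerivAt (g n) (g' n y) y)
    (hbound : ∀ a > 0, ∃ u : ℕ → ℝ, Summable u ∧ ∀ n y, a < y → ‖g' n y‖ ≤ u n)
    (hy₀ : 0 < y₀) (h0 : Summable (g · y₀)) (hx : 0 < x) : Summable (g · x) := by
  obtain ⟨u, hu, hgu⟩ := hbound (min x y₀ / 2) (by positivity)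
  exact summable_of_summable_hasDerivAt_of_isPreconnected hu isOpen_Ioi isPreconnected_Ioi
    (fun n y hy => hg n y ((half_pos (lt_min hx hy₀)).trans hy)) (fun n y hy => hgu n y hy)
    (show min x y₀ / 2 < y₀ by linarith [min_le_right x y₀, lt_min hx hy₀]) h0
    (show min x y₀ / 2 < x by linarith [min_le_left x y₀, lt_min hx hy₀])

theorem hasDerivAt_tsum_Ioi (hg : ∀ n y, 0 < y → HasDerivAt (g n) (g' n y) y)
    (hbound : ∀ a > 0, ∃ u : ℕ → ℝ, Summable u ∧ ∀ n y, a < y → ‖g' n y‖ ≤ u n)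
    (hy₀ : 0 < y₀) (h0 : Summable (g · y₀)) (hx : 0 < x) :
    HasDerivAt (fun z => ∑' n, g n z) (∑' n, g' n x) x := by
  obtain ⟨u, hu, hgu⟩ := hbound (min x y₀ / 2) (by positivity)
  exact hasDerivAt_tsum_of_isPreconnected hu isOpen_Ioi isPreconnected_Ioi
    (fun n y hy => hg n y ((half_pos (lt_min hx hy₀)).trans hy)) (fun n y hy => hgu n y hy)
    (show min x y₀ / 2 < y₀ by linarith [min_le_right x y₀, lt_min hx hy₀]) h0
    (show min x y₀ / 2 < x by linarith [min_le_left x y₀, lt_min hx hy₀])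

end SeriesOnIoi

theorem hasSum_one_div_add_sub_one_div_add_succ {x : ℝ} (hx : 0 < x) :
    HasSum (fun k : ℕ => 1 / (x + k) - 1 / (x + (k + 1 : ℕ))) (1 / x) := by
  rw [hasSum_iff_tendsto_nat_of_nonneg (fun k => sub_nonneg.mpr (by gcongr; simp))]
  simp_rw [Finset.sum_range_sub' (fun k : ℕ => 1 / (x + k)), Nat.cast_zero, add_zero]
  simpa using (tendsto_const_nhds (x := 1 / x)).sub
    ((tendsto_atTop_add_const_left _ x tendsto_natCast_atTop_atTop).inv_tendsto_atTop)

noncomputable def hurwitzSeries (p : ℕ) (x : ℝ) : ℝ := ∑' k : ℕ, 1 / (x + k) ^ p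

noncomputable def digammaSeries (x : ℝ) : ℝ := ∑' k : ℕ, (1 / (k + 1) - 1 / (x + k))

theorem hasDerivAt_hurwitzSeries {p : ℕ} (hp : 2 ≤ p) {x : ℝ} (hx : 0 < x) :
    HasDerivAt (hurwitzSeries p) (-p * hurwitzSeries (p + 1) x) x := by
  have := hasDerivAt_tsum_Ioi (g := fun k y => 1 / (y + k) ^ p)
    (fun k y hy => hasDerivAt_one_div_add_pow k p (by positivity))
    (fun a ha => exists_summable_bound_div_add_pow _ (by omega) ha) one_pos
    (summable_one_div_add_pow one_pos hp) hx
  unfold hurwitzSeries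
  rw [← tsum_mul_left]
  simpa only [mul_one_div] using this

theorem hasDerivAt_digammaSeries_term (k : ℕ) {y : ℝ} (hy : 0 < y) :
    HasDerivAt (fun z => 1 / ((k : ℝ) + 1) - 1 / (z + k)) (1 / (y + k) ^ 2) y := by
  simpa [neg_div] using
    (hasDerivAt_one_div_add_pow k 1 (y := y) (by positivity)).const_sub (1 / ((k : ℝ) + 1))

theorem summable_digammaSeries {x : ℝ} (hx : 0 < x) :
    Summable (fun k : ℕ => 1 / ((k : ℝ) + 1) - 1 / (x + k)) :=
  summable_of_hasDerivAt_Ioi (fun k _ => hasDerivAt_digammaSeries_term k)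
    (fun _ ha => exists_summable_bound_div_add_pow _ le_rfl ha) one_pos (by simp [add_comm]) hx

theorem hasDerivAt_digammaSeries {x : ℝ} (hx : 0 < x) :
    HasDerivAt digammaSeries (hurwitzSeries 2 x) x :=
  hasDerivAt_tsum_Ioi (fun k _ => hasDerivAt_digammaSeries_term k)
    (fun _ ha => exists_summable_bound_div_add_pow _ le_rfl ha) one_pos (by simp [add_comm]) hx

theorem digammaSeries_one : digammaSeries 1 = 0 := by
  simp [digammaSeries, add_comm]

theorem digammaSeries_add_one {x : ℝ} (hx : 0 < x) :
    digammaSeries (x + 1) = digammaSeries x + 1 / x := by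
  have hdiff := (summable_digammaSeries (by positivity : 0 < x + 1)).tsum_sub
    (summable_digammaSeries hx)
  rw [digammaSeries, digammaSeries, ← sub_eq_iff_eq_add', ← hdiff,
    ← (hasSum_one_div_add_sub_one_div_add_succ hx).tsum_eq]
  exact tsum_congr fun k => by push_cast; ring

theorem monotoneOn_digammaSeries : MonotoneOn digammaSeries (Ioi 0) := by
  intro x (hx : 0 < x) y (hy : 0 < y) hxy
  refine (summable_digammaSeries hx).tsum_le_tsum (fun k => ?_) (summable_digammaSeries hy)
  gcongr

noncomputable def GammaLogIntegral (k : ℕ) (s : ℝ) : ℝ :=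
  ∫ t in Ioi (0 : ℝ), t ^ (s - 1) * (log t ^ k * exp (-t))

-- Complex-valued, so that Mathlib's differentiation of Mellin transforms applies.
noncomputable def logPowMulExpNeg (k : ℕ) (t : ℝ) : ℂ := ((log t ^ k * exp (-t) : ℝ) : ℂ)

namespace logPowMulExpNeg

theorem norm_eq (k : ℕ) (t : ℝ) : ‖logPowMulExpNeg k t‖ = |log t| ^ k * exp (-t) := by
  rw [logPowMulExpNeg, Complex.norm_real, Real.norm_eq_abs, abs_mul, abs_pow,
    abs_of_pos (exp_pos _)]

theorem isBigO_atTop (k : ℕ) (a : ℝ) : logPowMulExpNeg k =O[atTop] (· ^ (-a)) := by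
  have hpoly : logPowMulExpNeg k =O[atTop] fun t : ℝ => t ^ (k : ℝ) * exp (-1 * t) := by
    refine isBigO_iff.mpr ⟨1, ?_⟩
    filter_upwards [eventually_ge_atTop 1] with t ht
    have hlog : |log t| ≤ t := by
      rw [abs_of_nonneg (log_nonneg ht)]
      linarith [log_le_sub_one_of_pos (zero_lt_one.trans_le ht)]
    rw [norm_eq, one_mul, neg_one_mul, norm_mul, norm_of_nonneg (rpow_nonneg (by linarith) _),
      norm_of_nonneg (exp_pos _).le, rpow_natCast]
    gcongr
  refine hpoly.trans (((isBigO_refl _ atTop).mul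
    (isLittleO_exp_neg_mul_rpow_atTop one_pos (-a - k)).isBigO).congr' .rfl ?_)
  filter_upwards [eventually_gt_atTop 0] with t ht
  rw [← rpow_add ht, add_sub_cancel]

theorem isBigO_nhdsGT_zero (k : ℕ) {b : ℝ} (hb : 0 < b) :
    logPowMulExpNeg k =O[𝓝[>] 0] (· ^ (-b)) := by
  have hlog : logPowMulExpNeg k =O[𝓝[>] 0] fun t : ℝ => |log t| ^ (k : ℝ) := by
    refine isBigO_iff.mpr ⟨1, ?_⟩
    filter_upwards [self_mem_nhdsWithin] with t (ht : 0 < t)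
    rw [norm_eq, one_mul, norm_of_nonneg (rpow_nonneg (abs_nonneg _) _), rpow_natCast]
    exact mul_le_of_le_one_right (by positivity) (exp_le_one_iff.mpr (neg_nonpos.mpr ht.le))
  exact hlog.trans (isLittleO_abs_log_rpow_rpow_nhdsGT_zero _ (neg_neg_iff_pos.mpr hb)).isBigO

theorem locallyIntegrableOn (k : ℕ) : LocallyIntegrableOn (logPowMulExpNeg k) (Ioi 0) := by
  refine ContinuousOn.locallyIntegrableOn ?_ measurableSet_Ioi
  exact Complex.continuous_ofReal.comp_continuousOn <|
    ((continuousOn_log.mono fun t ht => ne_of_gt ht).pow k).mul (by fun_prop)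

theorem log_smul (k : ℕ) : (fun t => log t • logPowMulExpNeg k t) = logPowMulExpNeg (k + 1) := by
  ext t
  simp only [logPowMulExpNeg, Complex.real_smul]
  push_cast
  ring

theorem mellin_eq (k : ℕ) (s : ℝ) : mellin (logPowMulExpNeg k) s = GammaLogIntegral k s := by
  rw [mellin, GammaLogIntegral]
  refine Eq.trans (setIntegral_congr_fun measurableSet_Ioi fun t ht => ?_) integral_ofReal
  rw [logPowMulExpNeg, smul_eq_mul, ← Complex.ofReal_one, ← Complex.ofReal_sub,
    ← Complex.ofReal_cpow (le_of_lt ht)]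
  norm_cast

end logPowMulExpNeg

theorem hasDerivAt_GammaLogIntegral (k : ℕ) {s : ℝ} (hs : 0 < s) :
    HasDerivAt (GammaLogIntegral k) (GammaLogIntegral (k + 1) s) s := by
  have hmellin := (mellin_hasDerivAt_of_isBigO_rpow (s := s) (logPowMulExpNeg.locallyIntegrableOn k)
    (logPowMulExpNeg.isBigO_atTop k (s + 1)) (by simp)
    (logPowMulExpNeg.isBigO_nhdsGT_zero k (half_pos hs)) (by simpa using half_lt_self hs)).2
  rw [logPowMulExpNeg.log_smul] at hmellin
  simpa only [logPowMulExpNeg.mellin_eq, Complex.ofReal_re] using hmellin.real_of_complex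

theorem GammaLogIntegral_zero {s : ℝ} (hs : 0 < s) : GammaLogIntegral 0 s = Gamma s := by
  rw [Gamma_eq_integral hs, GammaLogIntegral]
  exact setIntegral_congr_fun measurableSet_Ioi fun t _ => by simp [mul_comm]

theorem HasDerivAt.unique_of_eqOn {f g : ℝ → ℝ} {f' g' x : ℝ} {s : Set ℝ} (hs : IsOpen s)
    (hfg : EqOn f g s) (hx : x ∈ s) (hf : HasDerivAt f f' x) (hg : HasDerivAt g g' x) :
    f' = g' :=
  hf.unique (hg.congr_of_eventuallyEq (hfg.eventuallyEq_of_mem (hs.mem_nhds hx)))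

theorem differentiableAt_log_Gamma {x : ℝ} (hx : 0 < x) : DifferentiableAt ℝ (log ∘ Gamma) x :=
  (differentiableAt_Gamma fun m => by linarith [m.cast_nonneg (α := ℝ)]).log
    (Gamma_pos_of_pos hx).ne'

theorem deriv_log_Gamma_add_one {x : ℝ} (hx : 0 < x) :
    deriv (log ∘ Gamma) (x + 1) = deriv (log ∘ Gamma) x + 1 / x := by
  have hfeq : (fun y => (log ∘ Gamma) (y + 1)) =ᶠ[𝓝 x] fun y => (log ∘ Gamma) y + log y := by
    filter_upwards [isOpen_Ioi.mem_nhds hx] with y (hy : 0 < y)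
    simp only [Function.comp, Gamma_add_one hy.ne', log_mul hy.ne' (Gamma_pos_of_pos hy).ne']
    ring
  rw [← deriv_comp_add_const, hfeq.deriv_eq, deriv_fun_add (differentiableAt_log_Gamma hx)
    (differentiableAt_log hx.ne'), deriv_log, one_div]

theorem deriv_log_Gamma_one : deriv (log ∘ Gamma) 1 = -γ := by
  simpa [Function.comp_def] using (hasDerivAt_Gamma_one.log (by simp)).deriv

theorem deriv_log_Gamma_eq_digammaSeries :
    EqOn (deriv (log ∘ Gamma)) (fun x => digammaSeries x - γ) (Ioi 0) := by
  refine eqOn_Ioi_of_monotoneOn_of_add_one (r := fun x => 1 / x)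
    (convexOn_log_Gamma.monotoneOn_deriv fun x hx => differentiableAt_log_Gamma hx)
    (fun x hx y hy hxy => by simpa using monotoneOn_digammaSeries hx hy hxy)
    (fun x hx => deriv_log_Gamma_add_one hx)
    (fun x hx => by simp only [digammaSeries_add_one hx]; ring)
    (by simpa only [one_div] using tendsto_inv_atTop_zero)
    (by simp [deriv_log_Gamma_one, digammaSeries_one])

theorem hasDerivAt_Gamma_eq_GammaLogIntegral {x : ℝ} (hx : 0 < x) :
    HasDerivAt Gamma (GammaLogIntegral 1 x) x :=
  (hasDerivAt_GammaLogIntegral 0 hx).congr_of_eventuallyEq <| by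
    filter_upwards [isOpen_Ioi.mem_nhds hx] with y hy
    exact (GammaLogIntegral_zero hy).symm

theorem GammaLogIntegral_one_eq {x : ℝ} (hx : 0 < x) :
    GammaLogIntegral 1 x = Gamma x * (digammaSeries x - γ) := by
  have hψ : deriv (log ∘ Gamma) x = digammaSeries x - γ := deriv_log_Gamma_eq_digammaSeries hx
  have hlog : HasDerivAt (log ∘ Gamma) (GammaLogIntegral 1 x / Gamma x) x :=
    (hasDerivAt_Gamma_eq_GammaLogIntegral hx).log (Gamma_pos_of_pos hx).ne'
  rw [← hψ, hlog.deriv]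
  field_simp [(Gamma_pos_of_pos hx).ne']

theorem GammaLogIntegral_two_eq {x : ℝ} (hx : 0 < x) :
    GammaLogIntegral 2 x = Gamma x * ((digammaSeries x - γ) ^ 2 + hurwitzSeries 2 x) := by
  have h := HasDerivAt.unique_of_eqOn isOpen_Ioi (fun y hy => GammaLogIntegral_one_eq hy) hx
    (hasDerivAt_GammaLogIntegral 1 hx) ((hasDerivAt_Gamma_eq_GammaLogIntegral hx).mul
      ((hasDerivAt_digammaSeries hx).sub_const γ))
  rw [h, GammaLogIntegral_one_eq hx]
  ring

theorem GammaLogIntegral_three_eq {x : ℝ} (hx : 0 < x) :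
    GammaLogIntegral 3 x = Gamma x * ((digammaSeries x - γ) ^ 3
      + 3 * (digammaSeries x - γ) * hurwitzSeries 2 x - 2 * hurwitzSeries 3 x) := by
  have h := HasDerivAt.unique_of_eqOn isOpen_Ioi (fun y hy => GammaLogIntegral_two_eq hy) hx
    (hasDerivAt_GammaLogIntegral 2 hx) ((hasDerivAt_Gamma_eq_GammaLogIntegral hx).mul
      ((((hasDerivAt_digammaSeries hx).sub_const γ).pow 2).add
        (hasDerivAt_hurwitzSeries le_rfl hx)))
  rw [h, GammaLogIntegral_one_eq hx]
  push_cast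
  ring

theorem hurwitzSeries_one {p : ℕ} (hp : 1 < p) : hurwitzSeries p 1 = (riemannZeta p).re := by
  have hcast : (fun n : ℕ => 1 / (n : ℂ) ^ p) = fun n : ℕ => ((1 / (n : ℝ) ^ p : ℝ) : ℂ) := by
    ext n
    push_cast
    rfl
  rw [zeta_nat_eq_tsum_of_gt_one hp, hcast, ← Complex.ofReal_tsum, Complex.ofReal_re,
    (Real.summable_one_div_nat_pow.mpr hp).tsum_eq_zero_add, hurwitzSeries]
  simp [add_comm]
  omega

theorem I_three_eq :
    -(∫ v in Set.Ioi (0 : ℝ), (Real.log v) ^ 3 * Real.exp (-v))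
      = 2 * (riemannZeta 3).re + Real.eulerMascheroniConstant ^ 3
        + Real.eulerMascheroniConstant * π ^ 2 / 2 := by
  have hintegral : ∫ v in Ioi (0 : ℝ), log v ^ 3 * exp (-v) = GammaLogIntegral 3 1 := by
    simp [GammaLogIntegral]
  have hζ2 : hurwitzSeries 2 1 = π ^ 2 / 6 := by
    rw [hurwitzSeries_one one_lt_two, Nat.cast_ofNat, riemannZeta_two]
    norm_cast
  have hζ3 : hurwitzSeries 3 1 = (riemannZeta 3).re := by
    exact_mod_cast hurwitzSeries_one (p := 3) (by norm_num)
  rw [hintegral, GammaLogIntegral_three_eq one_pos, Gamma_one, digammaSeries_one, hζ2, hζ3]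
  ring
end
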